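/- In a graded 2D open-closed TQFT with closed sector (C, μ_C, λ_C, η_C, ε_C) and open sector (A, μ_A, λ_A, η_A, ε_A), zipper ζ : C → A and cozipper ζ* : A → C, assuming relations (1) both sectors are biunital coFrobenius bialgebras, (3) ζ is an algebra map, and (5) (1⊗ζ)c_C = (ζ*⊗1)c_A, the cozipper is a coalgebra map: (ζ*⊗ζ*)λ_A = (-1)^{|ζ*||λ_A|} λ_C ζ* and ε_A = ε_C ζ*. -/

import Mathlib

/-!
With products of degree `0`, each sector is a Frobenius algebra whose pairing `p = ±εμ` is
nondegenerate, the copairing `c` being its inverse (snake identities). Relation (5) then makes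
`ζ*` the adjoint of `ζ` for these pairings, and since `ζ` is an algebra map, `ζ*` is a map of
`C`-modules (Frobenius reciprocity). Applying `ζ* ⊗ ζ*` to `λ_A = (1 ⊗ μ_A)(c_A ⊗ 1)`, moving the
first `ζ*` onto `c_A` with (5) and the second one past `μ_A` gives `(1 ⊗ μ_C)(c_C ⊗ ζ*) = λ_C ζ*`.
For the counit, `ε_C ζ* = ± p_A(ζ η_C, -) = ± p_A(η_A, -) = ε_A`.
-/

open TensorProduct LinearMap
open scoped TensorProduct DirectSum

namespace GradedCoFrob

variable {R : Type} [CommRing R] {M : Type} [AddCommGroup M] [Module R M]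

/-- The Koszul sign `(-1)^n` for `n : ℤ`. -/
def ksign (n : ℤ) : ℤ := (((-1 : ℤˣ) ^ n : ℤˣ) : ℤ)

variable (𝒜 : ℤ → Submodule R M) [DirectSum.Decomposition 𝒜]

/-- Build a linear map `M →ₗ N` out of its values on the homogeneous pieces,
bundled linearly in the family of values. -/
noncomputable def fromPiecesHom {N : Type} [AddCommGroup N] [Module R N] :
    (∀ i : ℤ, 𝒜 i →ₗ[R] N) →ₗ[R] (M →ₗ[R] N) :=
  (LinearMap.lcomp R N (DirectSum.decomposeLinearEquiv 𝒜).toLinearMap).comp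
    (DFinsupp.lsum R (M := fun i => 𝒜 i) (N := N)).toLinearMap

/-- Build a linear map `M →ₗ N` out of its values on the homogeneous pieces. -/
noncomputable def fromPieces {N : Type} [AddCommGroup N] [Module R N]
    (f : ∀ i : ℤ, 𝒜 i →ₗ[R] N) : M →ₗ[R] N :=
  fromPiecesHom 𝒜 f

/-- Build a bilinear map `M →ₗ M →ₗ N` out of its values on pairs of homogeneous pieces. -/
noncomputable def fromPieces₂ {N : Type} [AddCommGroup N] [Module R N]
    (f : ∀ i j : ℤ, 𝒜 i →ₗ[R] 𝒜 j →ₗ[R] N) : M →ₗ[R] M →ₗ[R] N :=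
  fromPieces 𝒜 (fun i => (fromPiecesHom 𝒜).comp (LinearMap.pi (fun j => f i j)))

/-- The operator multiplying the degree `i` component by the Koszul sign `(-1)^(d*i)`. -/
noncomputable def signAction (d : ℤ) : M →ₗ[R] M :=
  fromPieces 𝒜 (fun i => ksign (d * i) • (𝒜 i).subtype)

/-- The Koszul twist `τ(a ⊗ b) = (-1)^{|a||b|} b ⊗ a`. -/
noncomputable def twist : M ⊗[R] M →ₗ[R] M ⊗[R] M :=
  TensorProduct.lift (fromPieces₂ 𝒜 (fun i j =>
    ksign (i * j) • ((((TensorProduct.mk R M M).flip).comp (𝒜 i).subtype).compl₂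
      (𝒜 j).subtype)))

/-- Left contraction `(f ⊗ 1)(x ⊗ y) = f(x) • y` (no Koszul sign since `1` has degree `0`). -/
noncomputable def contrL {N : Type} [AddCommGroup N] [Module R N]
    (f : N →ₗ[R] R) : N ⊗[R] M →ₗ[R] M :=
  TensorProduct.lift ((LinearMap.lsmul R M).comp f)

/-- Right contraction with Koszul sign:
`(1 ⊗ f)(x ⊗ y) = (-1)^{d|x|} f(y) • x` where `d` is the degree of `f`. -/
noncomputable def contrR {N : Type} [AddCommGroup N] [Module R N]
    (f : N →ₗ[R] R) (d : ℤ) : M ⊗[R] N →ₗ[R] M :=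
  TensorProduct.lift ((((LinearMap.lsmul R M).comp f).flip).comp (signAction 𝒜 d))

/-- Koszul-signed evaluation of a pair of functionals on a tensor:
`(x ⊗ y) ↦ f((-1)^{d₁|x|} x) * g((-1)^{d₂|y|} y)`. -/
noncomputable def ev2 (f g : M →ₗ[R] R) (d₁ d₂ : ℤ) : M ⊗[R] M →ₗ[R] R :=
  TensorProduct.lift (((LinearMap.mul R R).comp (f.comp (signAction 𝒜 d₁))).compl₂
    (g.comp (signAction 𝒜 d₂)))

/-- The map `c⃗ : A^∨ → A`, `f ↦ (-1)^{|f||c|}(f ⊗ 1)c`, implemented by putting the sign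
`(-1)^{dc |x|}` on the first tensor factor of the copairing `c` (of degree `dc`). -/
noncomputable def cvec (c : M ⊗[R] M) (dc : ℤ) : (M →ₗ[R] R) →ₗ[R] M :=
  (LinearMap.applyₗ ((LinearMap.rTensor M (signAction 𝒜 dc)) c)).comp
    ((TensorProduct.lift.equiv (RingHom.id R) M M M).toLinearMap.comp
      (LinearMap.llcomp R M R (M →ₗ[R] M) (LinearMap.lsmul R M)))

/-- The operation `(1 ⊗ c ⊗ 1) : A ⊗ A → (A ⊗ A) ⊗ (A ⊗ A)`,
`a ⊗ b ↦ (-1)^{|c||a|} (a ⊗ c₁) ⊗ (c₂ ⊗ b)` for a copairing `c` of degree `dc`. -/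
noncomputable def midIns (c : M ⊗[R] M) (dc : ℤ) :
    M ⊗[R] M →ₗ[R] (M ⊗[R] M) ⊗[R] (M ⊗[R] M) :=
  (TensorProduct.assoc R (M ⊗[R] M) M M).toLinearMap.comp
    (LinearMap.rTensor M
      (((TensorProduct.assoc R M M M).symm.toLinearMap).comp
        (((TensorProduct.mk R M (M ⊗[R] M)).flip c).comp (signAction 𝒜 dc))))

/-- The Koszul-signed cyclic permutation `σ(a⊗b⊗c) = (-1)^{(|a|+|b|)|c|} c⊗a⊗b`. -/
noncomputable def cyc : (M ⊗[R] M) ⊗[R] M →ₗ[R] (M ⊗[R] M) ⊗[R] M :=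
  (LinearMap.rTensor M (twist 𝒜)).comp
    ((TensorProduct.assoc R M M M).symm.toLinearMap.comp
      ((LinearMap.lTensor M (twist 𝒜)).comp (TensorProduct.assoc R M M M).toLinearMap))

/-- The submodule `A_i ⊗ A_j ⊆ A ⊗ A`. -/
noncomputable def tpiece (i j : ℤ) : Submodule R (M ⊗[R] M) :=
  LinearMap.range (TensorProduct.map (𝒜 i).subtype (𝒜 j).subtype)

/-- The degree `k` part `⨁_{i+j=k} A_i ⊗ A_j` of `A ⊗ A`. -/
noncomputable def tgrade (k : ℤ) : Submodule R (M ⊗[R] M) :=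
  ⨆ i : ℤ, tpiece 𝒜 i (k - i)

/-- A product is homogeneous of degree `d`. -/
def IsHomogProd (d : ℤ) (mu : M ⊗[R] M →ₗ[R] M) : Prop :=
  ∀ i j : ℤ, ∀ x ∈ 𝒜 i, ∀ y ∈ 𝒜 j, mu (x ⊗ₜ[R] y) ∈ 𝒜 (i + j + d)

/-- A coproduct is homogeneous of degree `d`. -/
def IsHomogCoprod (d : ℤ) (lam : M →ₗ[R] M ⊗[R] M) : Prop :=
  ∀ k : ℤ, ∀ x ∈ 𝒜 k, lam x ∈ tgrade 𝒜 (k + d)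

/-- A scalar-valued functional is homogeneous of degree `d`. -/
def IsHomogFun (d : ℤ) (f : M →ₗ[R] R) : Prop :=
  ∀ i : ℤ, i ≠ -d → ∀ x ∈ 𝒜 i, f x = 0

/-- A pairing is homogeneous of degree `d`. -/
def IsHomogPairing (d : ℤ) (p : M ⊗[R] M →ₗ[R] R) : Prop :=
  ∀ i j : ℤ, i + j ≠ -d → ∀ x ∈ 𝒜 i, ∀ y ∈ 𝒜 j, p (x ⊗ₜ[R] y) = 0

end GradedCoFrob
namespace GradedCoFrob

/-- A unital coFrobenius bialgebra structure on a ℤ-graded module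
(Definition `defi:coFrobenius-unital-bialgebra`), with all Koszul sign conventions explicit. -/
structure UnitalCoFrob (R : Type) [CommRing R] {M : Type} [AddCommGroup M] [Module R M]
    (𝒜 : ℤ → Submodule R M) [DirectSum.Decomposition 𝒜] where
  mu : M ⊗[R] M →ₗ[R] M
  lam : M →ₗ[R] M ⊗[R] M
  unit : M
  dm : ℤ
  dl : ℤ
  mu_homog : IsHomogProd 𝒜 dm mu
  lam_homog : IsHomogCoprod 𝒜 dl lam
  unit_homog : unit ∈ 𝒜 (-dm)
  /-- graded associativity `μ(μ⊗1) = (-1)^{|μ|} μ(1⊗μ)` -/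
  mu_assoc : mu.comp (LinearMap.rTensor M mu) =
    ksign dm • (mu.comp ((TensorProduct.map (signAction 𝒜 dm) mu).comp
      (TensorProduct.assoc R M M M).toLinearMap))
  /-- `(-1)^{|μ|} μ(η ⊗ 1) = 1` -/
  unit_left : ksign dm • (mu.comp ((TensorProduct.mk R M M) unit)) = LinearMap.id
  /-- `μ(1 ⊗ η) = 1` -/
  unit_right : mu.comp (((TensorProduct.mk R M M).flip unit).comp (signAction 𝒜 (-dm))) =
    LinearMap.id
  cop : M ⊗[R] M
  /-- the copairing `c = (-1)^{|λ||μ|+|μ|} λη` -/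
  cop_def : cop = ksign (dl * dm + dm) • lam unit
  /-- `λ = (1⊗μ)(c⊗1)` -/
  cofrob_left : lam = (TensorProduct.map (signAction 𝒜 dm) mu).comp
    ((TensorProduct.assoc R M M M).toLinearMap.comp (TensorProduct.mk R (M ⊗[R] M) M cop))
  /-- `λ = (-1)^{|μ|}(μ⊗1)(1⊗c)` -/
  cofrob_right : lam = ksign dm • ((LinearMap.rTensor M mu).comp
    ((TensorProduct.assoc R M M M).symm.toLinearMap.comp
      (((TensorProduct.mk R M (M ⊗[R] M)).flip cop).comp (signAction 𝒜 (dl - dm)))))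
  /-- `τc = (-1)^{|λ|} c` -/
  cop_symm : twist 𝒜 cop = ksign dl • cop

/-- A biunital coFrobenius bialgebra structure on a ℤ-graded module
(Definition `defi:biunital-coFrobenius-bialgebra`), with all Koszul sign conventions explicit. -/
structure BiunitalCoFrob (R : Type) [CommRing R] {M : Type} [AddCommGroup M] [Module R M]
    (𝒜 : ℤ → Submodule R M) [DirectSum.Decomposition 𝒜] where
  mu : M ⊗[R] M →ₗ[R] M
  lam : M →ₗ[R] M ⊗[R] M
  unit : M
  counit : M →ₗ[R] R
  dm : ℤ
  dl : ℤ
  mu_homog : IsHomogProd 𝒜 dm mu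
  lam_homog : IsHomogCoprod 𝒜 dl lam
  unit_homog : unit ∈ 𝒜 (-dm)
  counit_homog : IsHomogFun 𝒜 (-dl) counit
  mu_assoc : mu.comp (LinearMap.rTensor M mu) =
    ksign dm • (mu.comp ((TensorProduct.map (signAction 𝒜 dm) mu).comp
      (TensorProduct.assoc R M M M).toLinearMap))
  /-- graded coassociativity `(λ⊗1)λ = (-1)^{|λ|}(1⊗λ)λ` -/
  lam_coassoc : (LinearMap.rTensor M lam).comp lam =
    ksign dl • ((TensorProduct.assoc R M M M).symm.toLinearMap.comp
      ((TensorProduct.map (signAction 𝒜 dl) lam).comp lam))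
  unit_left : ksign dm • (mu.comp ((TensorProduct.mk R M M) unit)) = LinearMap.id
  unit_right : mu.comp (((TensorProduct.mk R M M).flip unit).comp (signAction 𝒜 (-dm))) =
    LinearMap.id
  /-- `(ε⊗1)λ = 1` -/
  counit_left : (contrL counit).comp lam = LinearMap.id
  /-- `(-1)^{|λ|}(1⊗ε)λ = 1` -/
  counit_right : ksign dl • ((contrR 𝒜 counit (-dl)).comp lam) = LinearMap.id
  cop : M ⊗[R] M
  cop_def : cop = ksign (dl * dm + dm) • lam unit
  pr : M ⊗[R] M →ₗ[R] R
  /-- the pairing `p = (-1)^{|λ|} εμ` -/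
  pr_def : pr = ksign dl • (counit.comp mu)
  cofrob_left : lam = (TensorProduct.map (signAction 𝒜 dm) mu).comp
    ((TensorProduct.assoc R M M M).toLinearMap.comp (TensorProduct.mk R (M ⊗[R] M) M cop))
  cofrob_right : lam = ksign dm • ((LinearMap.rTensor M mu).comp
    ((TensorProduct.assoc R M M M).symm.toLinearMap.comp
      (((TensorProduct.mk R M (M ⊗[R] M)).flip cop).comp (signAction 𝒜 (dl - dm)))))
  /-- `μ = (-1)^{|μ||λ|+|λ|}(p⊗1)(1⊗λ)` -/
  cofrob_pr_left : mu = ksign (dm * dl + dl) • ((contrL pr).comp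
    ((TensorProduct.assoc R M M M).symm.toLinearMap.comp
      (TensorProduct.map (signAction 𝒜 dl) lam)))
  /-- `μ = (-1)^{|μ||λ|}(1⊗p)(λ⊗1)` -/
  cofrob_pr_right : mu = ksign (dm * dl) • ((contrR 𝒜 pr (dm - dl)).comp
    ((TensorProduct.assoc R M M M).toLinearMap.comp (LinearMap.rTensor M lam)))
  cop_symm : twist 𝒜 cop = ksign dl • cop
  /-- `pτ = (-1)^{|μ|} p` -/
  pr_symm : pr.comp (twist 𝒜) = ksign dm • pr

end GradedCoFrob

namespace GradedCoFrob

section Signs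

@[simp] lemma ksign_zero : ksign 0 = 1 := rfl

lemma ksign_add (a b : ℤ) : ksign (a + b) = ksign a * ksign b := by
  simp only [ksign, zpow_add, Units.val_mul]

lemma ksign_add_self (a : ℤ) : ksign (a + a) = 1 := by
  rw [ksign_add]
  simp only [ksign, ← Units.val_mul, ← zpow_add, ← two_mul, zpow_mul]
  norm_num

lemma ksign_eq_ksign {a b : ℤ} (h : Even (a - b)) : ksign a = ksign b := by
  obtain ⟨m, hm⟩ := h
  rw [show a = m + m + b by omega, ksign_add, ksign_add_self, one_mul]

variable {M : Type} [AddCommGroup M]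

lemma ksign_smul_ksign_smul (a b : ℤ) (x : M) : ksign a • ksign b • x = ksign (a + b) • x := by
  rw [smul_smul, ksign_add]

lemma ksign_smul_eq_iff {a : ℤ} {x y : M} : ksign a • x = y ↔ x = ksign a • y := by
  constructor <;> rintro rfl <;> rw [ksign_smul_ksign_smul, ksign_add_self, one_smul]

end Signs

section Tensor

variable {R : Type} [CommRing R] {M N N' : Type} [AddCommGroup M] [Module R M]
  [AddCommGroup N] [Module R N] [AddCommGroup N'] [Module R N']

@[simp] lemma contrL_tmul (f : N →ₗ[R] R) (x : N) (y : M) :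
    contrL (M := M) f (x ⊗ₜ[R] y) = f x • y := by
  simp [contrL]

lemma contrL_rTensor (f : N →ₗ[R] R) (g : N' →ₗ[R] N) (t : N' ⊗[R] M) :
    contrL f (LinearMap.rTensor M g t) = contrL (f ∘ₗ g) t := by
  induction t using TensorProduct.induction_on with
  | zero => simp
  | tmul x y => simp
  | add u v hu hv => rw [map_add, map_add, hu, hv, map_add]

lemma contrL_zsmul (f : N →ₗ[R] R) (s : ℤ) :
    contrL (M := M) (s • f) = s • contrL (M := M) f := by
  ext x y
  simp [mul_smul, Int.cast_smul_eq_zsmul]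

lemma assoc_tmul_eq_lTensor (t : M ⊗[R] M) (w : M) :
    TensorProduct.assoc R M M M (t ⊗ₜ[R] w) =
      LinearMap.lTensor M ((TensorProduct.mk R M M).flip w) t := by
  induction t using TensorProduct.induction_on with
  | zero => simp
  | tmul x y => simp
  | add u v hu hv => rw [TensorProduct.add_tmul, map_add, map_add, hu, hv]

variable (𝒜 : ℤ → Submodule R M)

lemma tgrade_induction {k : ℤ} {P : M ⊗[R] M → Prop} {c : M ⊗[R] M}
    (hc : c ∈ tgrade 𝒜 k) (zero : P 0) (add : ∀ u v, P u → P v → P (u + v))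
    (tmul : ∀ j : ℤ, ∀ x ∈ 𝒜 j, ∀ y ∈ 𝒜 (k - j), P (x ⊗ₜ[R] y)) : P c := by
  refine Submodule.iSup_induction (motive := P) _ hc ?_ zero add
  rintro j _ ⟨s, rfl⟩
  induction s using TensorProduct.induction_on with
  | zero => simpa using zero
  | tmul x y => simpa using tmul j x x.2 y y.2
  | add u v hu hv => rw [map_add]; exact add _ _ hu hv

end Tensor

section Graded

variable {R : Type} [CommRing R] {M : Type} [AddCommGroup M] [Module R M]
  (𝒜 : ℤ → Submodule R M) [DirectSum.Decomposition 𝒜]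

lemma fromPieces_of_mem {N : Type} [AddCommGroup N] [Module R N]
    (f : ∀ i : ℤ, 𝒜 i →ₗ[R] N) {i : ℤ} {x : M} (hx : x ∈ 𝒜 i) :
    fromPieces 𝒜 f x = f i ⟨x, hx⟩ := by
  simp only [fromPieces, fromPiecesHom, LinearMap.comp_apply, LinearEquiv.coe_coe,
    LinearMap.lcomp_apply, DirectSum.decomposeLinearEquiv_apply, DirectSum.decompose_of_mem _ hx]
  erw [DFinsupp.lsum_single]

lemma signAction_of_mem {d i : ℤ} {x : M} (hx : x ∈ 𝒜 i) :
    signAction 𝒜 d x = ksign (d * i) • x :=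
  fromPieces_of_mem 𝒜 _ hx

lemma linearMap_ext_homogeneous {N : Type} [AddCommGroup N] [Module R N] {f g : M →ₗ[R] N}
    (h : ∀ i : ℤ, ∀ x ∈ 𝒜 i, f x = g x) : f = g := by
  classical
  ext x
  rw [← DirectSum.sum_support_decompose 𝒜 x, map_sum, map_sum]
  exact Finset.sum_congr rfl fun i _ => h i _ (SetLike.coe_mem _)

@[simp] lemma signAction_zero : signAction 𝒜 0 = LinearMap.id :=
  linearMap_ext_homogeneous 𝒜 fun i x hx => by simp [signAction_of_mem 𝒜 hx]

variable {N N' : Type} [AddCommGroup N] [Module R N] [AddCommGroup N'] [Module R N']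

@[simp] lemma contrR_tmul (f : N →ₗ[R] R) (d : ℤ) (x : M) (y : N) :
    contrR 𝒜 f d (x ⊗ₜ[R] y) = f y • signAction 𝒜 d x := by
  simp [contrR]

lemma contrR_lTensor (f : N →ₗ[R] R) (d : ℤ) (g : N' →ₗ[R] N) (t : M ⊗[R] N') :
    contrR 𝒜 f d (LinearMap.lTensor M g t) = contrR 𝒜 (f ∘ₗ g) d t := by
  induction t using TensorProduct.induction_on with
  | zero => simp
  | tmul x y => simp
  | add u v hu hv => rw [map_add, map_add, hu, hv, map_add]

lemma contrR_zsmul (f : N →ₗ[R] R) (d s : ℤ) : contrR 𝒜 (s • f) d = s • contrR 𝒜 f d := by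
  ext x y
  simp [mul_smul, Int.cast_smul_eq_zsmul]

lemma map_contrR {M₂ : Type} [AddCommGroup M₂] [Module R M₂]
    (ℬ : ℤ → Submodule R M₂) [DirectSum.Decomposition ℬ]
    {g : M₂ →ₗ[R] M} {e : ℤ} (hg : ∀ i : ℤ, ∀ x ∈ ℬ i, g x ∈ 𝒜 (i + e))
    (f : N →ₗ[R] R) (d : ℤ) (t : M₂ ⊗[R] N) :
    g (contrR ℬ f d t) = ksign (d * e) • contrR 𝒜 f d (LinearMap.rTensor N g t) := by
  suffices g ∘ₗ contrR ℬ f d = ksign (d * e) • contrR 𝒜 f d ∘ₗ LinearMap.rTensor N g from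
    LinearMap.congr_fun this t
  refine TensorProduct.ext (linearMap_ext_homogeneous ℬ fun i x hx => ?_)
  ext y
  simp only [LinearMap.compr₂ₛₗ_apply, TensorProduct.mk_apply, LinearMap.comp_apply,
    LinearMap.smul_apply, LinearMap.rTensor_tmul, contrR_tmul, signAction_of_mem ℬ hx,
    signAction_of_mem 𝒜 (hg i x hx), map_smul, map_zsmul, smul_comm (f y), ksign_smul_ksign_smul]
  exact congrArg (· • f y • g x) (ksign_eq_ksign ⟨-(d * e), by ring⟩)

lemma map_signAction_of_mem_tgrade (f g : M →ₗ[R] N) (d : ℤ) {k : ℤ} {t : M ⊗[R] M}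
    (ht : t ∈ tgrade 𝒜 k) :
    TensorProduct.map (f ∘ₗ signAction 𝒜 d) g t =
      ksign (d * k) • TensorProduct.map f (g ∘ₗ signAction 𝒜 d) t := by
  apply tgrade_induction 𝒜 ht
  · simp
  · intro u v hu hv
    rw [map_add, map_add, hu, hv, smul_add]
  intro j x hx y hy
  simp only [TensorProduct.map_tmul, LinearMap.comp_apply, signAction_of_mem 𝒜 hx,
    signAction_of_mem 𝒜 hy, map_zsmul, ← TensorProduct.smul_tmul', TensorProduct.tmul_smul,
    ksign_smul_ksign_smul]
  exact congrArg (· • _) (ksign_eq_ksign ⟨d * j - d * k, by ring⟩)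

end Graded

namespace BiunitalCoFrob

variable {R : Type} [CommRing R] {M : Type} [AddCommGroup M] [Module R M]
  {𝒜 : ℤ → Submodule R M} [DirectSum.Decomposition 𝒜] (B : BiunitalCoFrob R 𝒜)

lemma mu_tmul_mem (hdm : B.dm = 0) {i j : ℤ} {x y : M} (hx : x ∈ 𝒜 i) (hy : y ∈ 𝒜 j) :
    B.mu (x ⊗ₜ[R] y) ∈ 𝒜 (i + j) := by
  simpa [hdm] using B.mu_homog i j x hx y hy

lemma mu_unit_tmul (hdm : B.dm = 0) (a : M) : B.mu (B.unit ⊗ₜ[R] a) = a := by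
  simpa [hdm] using LinearMap.congr_fun B.unit_left a

lemma pr_tmul_mu (hdm : B.dm = 0) (z x w : M) :
    B.pr (z ⊗ₜ[R] B.mu (x ⊗ₜ[R] w)) = B.pr (B.mu (z ⊗ₜ[R] x) ⊗ₜ[R] w) := by
  have hassoc := LinearMap.congr_fun B.mu_assoc ((z ⊗ₜ[R] x) ⊗ₜ[R] w)
  simp only [hdm, signAction_zero, ksign_zero, one_smul, LinearMap.comp_apply,
    LinearMap.rTensor_tmul, LinearEquiv.coe_coe, TensorProduct.assoc_tmul,
    TensorProduct.map_tmul, LinearMap.id_apply] at hassoc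
  simp [B.pr_def, hassoc]

lemma pr_unit_tmul (hdm : B.dm = 0) (a : M) :
    B.pr (B.unit ⊗ₜ[R] a) = ksign B.dl • B.counit a := by
  simp [B.pr_def, B.mu_unit_tmul hdm]

lemma counit_comp_mu : B.counit ∘ₗ B.mu = ksign B.dl • B.pr := by
  rw [B.pr_def, ksign_smul_ksign_smul, ksign_add_self, one_smul]

lemma pr_eq_zero_of_ne (hdm : B.dm = 0) {i j : ℤ} (hij : i + j ≠ B.dl) {x y : M}
    (hx : x ∈ 𝒜 i) (hy : y ∈ 𝒜 j) : B.pr (x ⊗ₜ[R] y) = 0 := by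
  simp [B.pr_def, B.counit_homog (i + j) (by omega) _ (B.mu_tmul_mem hdm hx hy)]

lemma lam_apply (hdm : B.dm = 0) (x : M) :
    B.lam x = LinearMap.lTensor M (B.mu ∘ₗ (TensorProduct.mk R M M).flip x) B.cop := by
  rw [B.cofrob_left, hdm, signAction_zero, LinearMap.lTensor_comp_apply, ← assoc_tmul_eq_lTensor]
  rfl

lemma cop_eq_lam_unit (hdm : B.dm = 0) : B.cop = B.lam B.unit := by
  simp [B.cop_def, hdm]

lemma cop_mem_tgrade (hdm : B.dm = 0) : B.cop ∈ tgrade 𝒜 B.dl := by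
  have hunit : B.unit ∈ 𝒜 0 := by simpa [hdm] using B.unit_homog
  simpa [B.cop_eq_lam_unit hdm] using B.lam_homog 0 B.unit hunit

lemma contrL_counit_cop (hdm : B.dm = 0) : contrL B.counit B.cop = B.unit := by
  rw [B.cop_eq_lam_unit hdm, ← LinearMap.comp_apply (contrL B.counit), B.counit_left,
    LinearMap.id_apply]

/-- The snake identity `(1 ⊗ p)(c ⊗ 1) = 1`. -/
lemma contrR_pr_cop (hdm : B.dm = 0) (w : M) :
    contrR 𝒜 (B.pr ∘ₗ (TensorProduct.mk R M M).flip w) (-B.dl) B.cop = w := by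
  have hcounit := LinearMap.congr_fun B.counit_right w
  rwa [LinearMap.smul_apply, LinearMap.comp_apply, B.lam_apply hdm, contrR_lTensor,
    ← LinearMap.comp_assoc, counit_comp_mu, LinearMap.smul_comp, contrR_zsmul,
    LinearMap.smul_apply, ksign_smul_ksign_smul, ksign_add_self, one_smul] at hcounit

/-- The snake identity `(p ⊗ 1)(1 ⊗ c) = ±1`. -/
lemma contrL_pr_cop (hdm : B.dm = 0) {i : ℤ} {z : M} (hz : z ∈ 𝒜 i) :
    contrL B.pr ((TensorProduct.assoc R M M M).symm (z ⊗ₜ[R] B.cop)) =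
      ksign (B.dl * i + B.dl) • z := by
  have hlam : B.lam z = ksign (B.dl * i) •
      LinearMap.rTensor M B.mu ((TensorProduct.assoc R M M M).symm (z ⊗ₜ[R] B.cop)) := by
    rw [B.cofrob_right, hdm]
    simp [signAction_of_mem 𝒜 hz]
  have hcounit := LinearMap.congr_fun B.counit_left z
  rw [LinearMap.comp_apply, hlam, map_zsmul, contrL_rTensor, counit_comp_mu, contrL_zsmul,
    LinearMap.smul_apply, ksign_smul_ksign_smul, ksign_smul_eq_iff] at hcounit
  simpa [add_comm] using hcounit

lemma eq_of_pr_tmul_eq (hdm : B.dm = 0) {u v : M}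
    (h : ∀ i : ℤ, ∀ z ∈ 𝒜 i, B.pr (z ⊗ₜ[R] u) = B.pr (z ⊗ₜ[R] v)) : u = v := by
  rw [← B.contrR_pr_cop hdm u, ← B.contrR_pr_cop hdm v]
  exact congrArg (contrR 𝒜 · (-B.dl) B.cop) (linearMap_ext_homogeneous 𝒜 h)

lemma pr_tmul_contrR (hdm : B.dm = 0) (f : M →ₗ[R] R) (d : ℤ) {i : ℤ} {z : M} (hz : z ∈ 𝒜 i)
    {c : M ⊗[R] M} (hc : c ∈ tgrade 𝒜 B.dl) :
    B.pr (z ⊗ₜ[R] contrR 𝒜 f d c) =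
      ksign (d * (B.dl - i)) •
        f (contrL B.pr ((TensorProduct.assoc R M M M).symm (z ⊗ₜ[R] c))) := by
  apply tgrade_induction 𝒜 hc
  · simp
  · intro u v hu hv
    simp only [map_add, TensorProduct.tmul_add, hu, hv, smul_add]
  intro j x hx y _
  simp only [contrR_tmul, signAction_of_mem 𝒜 hx, TensorProduct.assoc_symm_tmul, contrL_tmul,
    map_smul, TensorProduct.tmul_smul, map_zsmul, smul_eq_mul]
  by_cases hij : i + j = B.dl
  · obtain rfl : j = B.dl - i := by omega
    ring
  · simp [B.pr_eq_zero_of_ne hdm hij hz hx]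

lemma counit_contrR (f : M →ₗ[R] R) (d : ℤ) {c : M ⊗[R] M} (hc : c ∈ tgrade 𝒜 B.dl) :
    B.counit (contrR 𝒜 f d c) = ksign (d * B.dl) • f (contrL B.counit c) := by
  apply tgrade_induction 𝒜 hc
  · simp
  · intro u v hu hv
    simp only [map_add, hu, hv, smul_add]
  intro j x hx y _
  simp only [contrR_tmul, signAction_of_mem 𝒜 hx, contrL_tmul, map_smul, map_zsmul, smul_eq_mul]
  by_cases hj : j = B.dl
  · subst hj
    ring
  · simp [B.counit_homog j (by omega) x hx]

end BiunitalCoFrob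

section Zipper

variable {R : Type} [CommRing R] {C A : Type} [AddCommGroup C] [Module R C]
  [AddCommGroup A] [Module R A] {𝒜 : ℤ → Submodule R C} [DirectSum.Decomposition 𝒜]
  {ℬ : ℤ → Submodule R A} [DirectSum.Decomposition ℬ] {BC : BiunitalCoFrob R 𝒜}
  {BA : BiunitalCoFrob R ℬ} {zip : C →ₗ[R] A} {cozip : A →ₗ[R] C}

/-- The snake identity for `c_A` together with relation (5) expresses `ζ*` through `ζ`. -/
lemma cozip_eq_contrR_cop (hdmA : BA.dm = 0)
    (hcozip_homog : ∀ i : ℤ, ∀ x ∈ ℬ i, cozip x ∈ 𝒜 (i + (BC.dl - BA.dl)))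
    (hdual : LinearMap.lTensor C zip BC.cop = LinearMap.rTensor A cozip BA.cop) (b : A) :
    cozip b = ksign (-BA.dl * (BC.dl - BA.dl)) •
      contrR 𝒜 ((BA.pr ∘ₗ (TensorProduct.mk R A A).flip b) ∘ₗ zip) (-BA.dl) BC.cop := by
  conv_lhs => rw [← BA.contrR_pr_cop hdmA b]
  rw [map_contrR 𝒜 ℬ hcozip_homog, ← hdual, contrR_lTensor]

lemma pr_tmul_cozip (hdmC : BC.dm = 0) (hdmA : BA.dm = 0)
    (hcozip_homog : ∀ i : ℤ, ∀ x ∈ ℬ i, cozip x ∈ 𝒜 (i + (BC.dl - BA.dl)))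
    (hdual : LinearMap.lTensor C zip BC.cop = LinearMap.rTensor A cozip BA.cop)
    {i : ℤ} {z : C} (hz : z ∈ 𝒜 i) (b : A) :
    BC.pr (z ⊗ₜ[R] cozip b) = ksign ((BC.dl - BA.dl) * (i + 1)) • BA.pr (zip z ⊗ₜ[R] b) := by
  rw [cozip_eq_contrR_cop hdmA hcozip_homog hdual, TensorProduct.tmul_smul, map_zsmul,
    BC.pr_tmul_contrR hdmC _ _ hz (BC.cop_mem_tgrade hdmC), BC.contrL_pr_cop hdmC hz, map_zsmul,
    ksign_smul_ksign_smul, ksign_smul_ksign_smul]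
  refine congrArg₂ (· • ·) (ksign_eq_ksign ?_) rfl
  simp [parity_simps, ← Int.not_even_iff_odd]
  tauto

/-- Frobenius reciprocity: `ζ*` is a map of `C`-modules, `C` acting on `A` through `ζ`. -/
lemma cozip_mu_zip_tmul (hdmC : BC.dm = 0) (hdmA : BA.dm = 0)
    (hcozip_homog : ∀ i : ℤ, ∀ x ∈ ℬ i, cozip x ∈ 𝒜 (i + (BC.dl - BA.dl)))
    (hzip_mul : BA.mu.comp (TensorProduct.map zip zip) = zip.comp BC.mu)
    (hdual : LinearMap.lTensor C zip BC.cop = LinearMap.rTensor A cozip BA.cop)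
    {j : ℤ} {x : C} (hx : x ∈ 𝒜 j) (a : A) :
    cozip (BA.mu (zip x ⊗ₜ[R] a)) = ksign ((BC.dl - BA.dl) * j) • BC.mu (x ⊗ₜ[R] cozip a) := by
  refine BC.eq_of_pr_tmul_eq hdmC fun i z hz => ?_
  have hzx : zip (BC.mu (z ⊗ₜ[R] x)) = BA.mu (zip z ⊗ₜ[R] zip x) :=
    (LinearMap.congr_fun hzip_mul (z ⊗ₜ[R] x)).symm
  calc BC.pr (z ⊗ₜ[R] cozip (BA.mu (zip x ⊗ₜ[R] a)))
      = ksign ((BC.dl - BA.dl) * (i + 1)) • BA.pr (BA.mu (zip z ⊗ₜ[R] zip x) ⊗ₜ[R] a) := by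
        rw [pr_tmul_cozip hdmC hdmA hcozip_homog hdual hz, BA.pr_tmul_mu hdmA]
    _ = ksign ((BC.dl - BA.dl) * j) • ksign ((BC.dl - BA.dl) * (i + j + 1)) •
          BA.pr (zip (BC.mu (z ⊗ₜ[R] x)) ⊗ₜ[R] a) := by
        rw [hzx, ksign_smul_ksign_smul]
        exact congrArg₂ (· • ·) (ksign_eq_ksign ⟨-((BC.dl - BA.dl) * j), by ring⟩) rfl
    _ = BC.pr (z ⊗ₜ[R] (ksign ((BC.dl - BA.dl) * j) • BC.mu (x ⊗ₜ[R] cozip a))) := by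
        rw [← pr_tmul_cozip hdmC hdmA hcozip_homog hdual (BC.mu_tmul_mem hdmC hz hx),
          TensorProduct.tmul_smul, map_zsmul, BC.pr_tmul_mu hdmC]

lemma map_cozip_comp_lam (hdmC : BC.dm = 0) (hdmA : BA.dm = 0)
    (hzip_homog : ∀ i : ℤ, ∀ x ∈ 𝒜 i, zip x ∈ ℬ i)
    (hcozip_homog : ∀ i : ℤ, ∀ x ∈ ℬ i, cozip x ∈ 𝒜 (i + (BC.dl - BA.dl)))
    (hzip_mul : BA.mu.comp (TensorProduct.map zip zip) = zip.comp BC.mu)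
    (hdual : LinearMap.lTensor C zip BC.cop = LinearMap.rTensor A cozip BA.cop) :
    (TensorProduct.map (cozip ∘ₗ signAction ℬ (BC.dl - BA.dl)) cozip) ∘ₗ BA.lam =
      ksign ((BC.dl - BA.dl) * BA.dl) • (BC.lam ∘ₗ cozip) := by
  ext a
  have hmodule : ((cozip ∘ₗ BA.mu ∘ₗ (TensorProduct.mk R A A).flip a) ∘ₗ
      signAction ℬ (BC.dl - BA.dl)) ∘ₗ zip =
      BC.mu ∘ₗ (TensorProduct.mk R C C).flip (cozip a) := by
    refine linearMap_ext_homogeneous 𝒜 fun m y hy => ?_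
    simp only [LinearMap.comp_apply, signAction_of_mem ℬ (hzip_homog m y hy), map_zsmul,
      LinearMap.flip_apply, TensorProduct.mk_apply,
      cozip_mu_zip_tmul hdmC hdmA hcozip_homog hzip_mul hdual hy, ksign_smul_ksign_smul,
      ksign_add_self, one_smul]
  rw [LinearMap.comp_apply, BA.lam_apply hdmA, LinearMap.map_lTensor,
    map_signAction_of_mem_tgrade ℬ _ _ _ (BA.cop_mem_tgrade hdmA),
    ← LinearMap.lTensor_comp_rTensor, LinearMap.comp_apply, ← hdual,
    ← LinearMap.lTensor_comp_apply, hmodule]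
  simp [BC.lam_apply hdmC]

lemma counit_comp_cozip (hdmC : BC.dm = 0) (hdmA : BA.dm = 0)
    (hcozip_homog : ∀ i : ℤ, ∀ x ∈ ℬ i, cozip x ∈ 𝒜 (i + (BC.dl - BA.dl)))
    (hzip_unit : zip BC.unit = BA.unit)
    (hdual : LinearMap.lTensor C zip BC.cop = LinearMap.rTensor A cozip BA.cop) :
    BC.counit ∘ₗ cozip = BA.counit := by
  ext a
  rw [LinearMap.comp_apply, cozip_eq_contrR_cop hdmA hcozip_homog hdual, map_zsmul,
    BC.counit_contrR _ _ (BC.cop_mem_tgrade hdmC), BC.contrL_counit_cop hdmC]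
  simp only [LinearMap.comp_apply, LinearMap.flip_apply, TensorProduct.mk_apply, hzip_unit,
    BA.pr_unit_tmul hdmA, ksign_smul_ksign_smul]
  rw [ksign_eq_ksign (b := 0) ?_, ksign_zero, one_smul]
  simp [parity_simps]
  tauto

end Zipper

theorem cozipper_coalgebra_map_general {R : Type} [CommRing R]
    {C : Type} [AddCommGroup C] [Module R C]
    {A : Type} [AddCommGroup A] [Module R A]
    (𝒜 : ℤ → Submodule R C) [DirectSum.Decomposition 𝒜]
    (ℬ : ℤ → Submodule R A) [DirectSum.Decomposition ℬ]
    (BC : BiunitalCoFrob R 𝒜) (BA : BiunitalCoFrob R ℬ)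
    (hdmC : BC.dm = 0) (hdmA : BA.dm = 0)
    (zip : C →ₗ[R] A) (cozip : A →ₗ[R] C)
    (hzip_homog : ∀ i : ℤ, ∀ x ∈ 𝒜 i, zip x ∈ ℬ i)
    (hcozip_homog : ∀ i : ℤ, ∀ x ∈ ℬ i, cozip x ∈ 𝒜 (i + (BC.dl - BA.dl)))
    -- (3) the zipper is an algebra homomorphism
    (hzip_mul : BA.mu.comp (TensorProduct.map zip zip) = zip.comp BC.mu)
    (hzip_unit : zip BC.unit = BA.unit)
    -- (5) the cozipper is dual to the zipper: (1⊗ζ)c_C = (ζ*⊗1)c_A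
    (hdual : LinearMap.lTensor C zip BC.cop = LinearMap.rTensor A cozip BA.cop) :
    -- (ζ*⊗ζ*)λ_A = (-1)^{|ζ*||λ_A|} λ_C ζ*
    ((TensorProduct.map (cozip.comp (signAction ℬ (BC.dl - BA.dl))) cozip).comp BA.lam =
      ksign ((BC.dl - BA.dl) * BA.dl) • (BC.lam.comp cozip)) ∧
    -- ε_A = ε_C ζ*
    (BA.counit = BC.counit.comp cozip) :=
  ⟨map_cozip_comp_lam hdmC hdmA hzip_homog hcozip_homog hzip_mul hdual,
    (counit_comp_cozip hdmC hdmA hcozip_homog hzip_unit hdual).symm⟩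

/-- In a graded 2D open-closed TQFT with closed sector
`(C,μ_C,λ_C,η_C,ε_C)`, open sector `(A,μ_A,λ_A,η_A,ε_A)` (both biunital coFrobenius
bialgebras whose products have degree `0`), zipper `ζ : C → A` (degree `0`) and cozipper
`ζ* : A → C` (degree `|λ_C|-|λ_A|`), assuming that `ζ` is an algebra map
(`μ_A(ζ⊗ζ) = ζμ_C`, `ζη_C = η_A`) and `(1⊗ζ)c_C = (ζ*⊗1)c_A`, the cozipper is a
coalgebra map: `(ζ*⊗ζ*)λ_A = (-1)^{|ζ*||λ_A|}λ_C ζ*` and `ε_A = ε_C ζ*`. -/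
theorem cozipper_coalgebra_map {R : Type} [CommRing R]
    {C : Type} [AddCommGroup C] [Module R C] [Module.Free R C] [Module.Finite R C]
    {A : Type} [AddCommGroup A] [Module R A] [Module.Free R A] [Module.Finite R A]
    (𝒜 : ℤ → Submodule R C) [DirectSum.Decomposition 𝒜]
    (ℬ : ℤ → Submodule R A) [DirectSum.Decomposition ℬ]
    (BC : BiunitalCoFrob R 𝒜) (BA : BiunitalCoFrob R ℬ)
    (hdmC : BC.dm = 0) (hdmA : BA.dm = 0)
    (zip : C →ₗ[R] A) (cozip : A →ₗ[R] C)
    (hzip_homog : ∀ i : ℤ, ∀ x ∈ 𝒜 i, zip x ∈ ℬ i)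
    (hcozip_homog : ∀ i : ℤ, ∀ x ∈ ℬ i, cozip x ∈ 𝒜 (i + (BC.dl - BA.dl)))
    -- (3) the zipper is an algebra homomorphism
    (hzip_mul : BA.mu.comp (TensorProduct.map zip zip) = zip.comp BC.mu)
    (hzip_unit : zip BC.unit = BA.unit)
    -- (5) the cozipper is dual to the zipper: (1⊗ζ)c_C = (ζ*⊗1)c_A
    (hdual : LinearMap.lTensor C zip BC.cop = LinearMap.rTensor A cozip BA.cop) :
    -- (ζ*⊗ζ*)λ_A = (-1)^{|ζ*||λ_A|} λ_C ζ*
    ((TensorProduct.map (cozip.comp (signAction ℬ (BC.dl - BA.dl))) cozip).comp BA.lam =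
      ksign ((BC.dl - BA.dl) * BA.dl) • (BC.lam.comp cozip)) ∧
    -- ε_A = ε_C ζ*
    (BA.counit = BC.counit.comp cozip) :=
  cozipper_coalgebra_map_general 𝒜 ℬ BC BA hdmC hdmA zip cozip hzip_homog hcozip_homog hzip_mul
    hzip_unit hdual

end GradedCoFrob
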